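/- Let H be an M×K complex matrix with HᴴH invertible, u ∈ ℂ^K nonzero, γ > 0, and set b = √γ · H(HᴴH)⁻¹u and x_δ = (HHᴴ + δ I_M)⁻¹ HHᴴ b for δ > 0. Then the map δ ↦ x_δᴴ x_δ is continuous and strictly decreasing on (0, ∞), tends to bᴴb as δ → 0⁺ and to 0 as δ → ∞. Consequently, if 0 < P_a < bᴴb, there exists a unique δ* > 0 such that x_{δ*}ᴴ x_{δ*} = P_a. -/

import Mathlib

open Matrix

noncomputable def sqNorm {n : ℕ} (v : Fin n → ℂ) : ℝ := ∑ i, ‖v i‖ ^ 2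

/-- The zero-forcing vector `b = √γ · H (Hᴴ H)⁻¹ u`. -/
noncomputable def bVec {M K : ℕ} (H : Matrix (Fin M) (Fin K) ℂ) (u : Fin K → ℂ) (γ : ℝ) :
    Fin M → ℂ :=
  ((Real.sqrt γ : ℂ)) • (H * (Hᴴ * H)⁻¹).mulVec u

/-- The regularized zero-forcing vector `x_δ = (H Hᴴ + δ I)⁻¹ (H Hᴴ) b`. -/
noncomputable def xVec {M K : ℕ} (H : Matrix (Fin M) (Fin K) ℂ) (u : Fin K → ℂ) (γ δ : ℝ) :
    Fin M → ℂ :=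
  (((H * Hᴴ + (δ : ℂ) • (1 : Matrix (Fin M) (Fin M) ℂ))⁻¹) * (H * Hᴴ)).mulVec (bVec H u γ)

/-!
The regularized zero-forcing precoder is a spectral filter: if `H Hᴴ = U diag(λ) Uᴴ` and
`c = Uᴴ b`, then `‖x_δ‖² = ∑ᵢ (λᵢ / (λᵢ + δ))² |cᵢ|²`. Every summand is continuous and
non-increasing in `δ > 0` and tends to `0` as `δ → ∞`. Since `b = √γ H (Hᴴ H)⁻¹ u` lies in the
range of `H Hᴴ`, `cᵢ = 0` whenever `λᵢ = 0`, so the sum tends to `∑ᵢ |cᵢ|² = ‖b‖²` as `δ → 0⁺`,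
and `b ≠ 0` makes some summand with `λᵢ > 0` strictly decreasing. The unique `δ*` then comes from
the intermediate value theorem.
-/

open Set Filter Topology Unitary
open scoped ComplexOrder

theorem existsUnique_eq_of_strictAntiOn_Ioi {α β : Type*} [ConditionallyCompleteLinearOrder α]
    [TopologicalSpace α] [OrderTopology α] [DenselyOrdered α] [NoMaxOrder α]
    [LinearOrder β] [TopologicalSpace β] [OrderClosedTopology β]
    {f : α → β} {a : α} {l L y : β} (hf : ContinuousOn f (Ioi a))
    (hanti : StrictAntiOn f (Ioi a)) (hbot : Tendsto f (𝓝[>] a) (𝓝 L))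
    (htop : Tendsto f atTop (𝓝 l)) (hy : y ∈ Ioo l L) :
    ∃! x, a < x ∧ f x = y := by
  obtain ⟨x, hx, rfl⟩ := isPreconnected_Ioi.intermediate_value_Ioo
    (le_principal_iff.mpr (Ioi_mem_atTop a)) (le_principal_iff.mpr self_mem_nhdsWithin)
    hf htop hbot hy
  exact ⟨x, ⟨hx, rfl⟩, fun x' hx' => hanti.injOn hx'.1 hx hx'.2⟩

noncomputable def spectralPower {ι : Type*} [Fintype ι] (lam w : ι → ℝ) (δ : ℝ) : ℝ :=
  ∑ i, (lam i / (lam i + δ)) ^ 2 * w i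

namespace spectralPower

variable {ι : Type*} [Fintype ι] {lam w : ι → ℝ}

theorem continuousOn_Ici (hlam : ∀ i, 0 ≤ lam i) :
    ContinuousOn (spectralPower lam w) (Ici 0) := by
  refine continuousOn_finsetSum _ fun i _ => ?_
  rcases (hlam i).eq_or_lt with hi | hi
  · simp only [← hi, zero_div]
    exact continuousOn_const
  · refine ((continuousOn_const.div (by fun_prop) fun δ hδ => ?_).pow 2).mul continuousOn_const
    exact (add_pos_of_pos_of_nonneg hi hδ).ne'

-- At `δ = 0` the summands with `lam i = 0` read `(0 / 0) ^ 2 * w i = 0`.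
theorem apply_zero (hw : ∀ i, lam i = 0 → w i = 0) : spectralPower lam w 0 = ∑ i, w i := by
  refine Finset.sum_congr rfl fun i _ => ?_
  by_cases hi : lam i = 0
  · simp [hi, hw i hi]
  · simp [hi]

theorem strictAntiOn (hlam : ∀ i, 0 ≤ lam i) (hw : ∀ i, 0 ≤ w i)
    (hpos : ∃ i, 0 < lam i ∧ 0 < w i) : StrictAntiOn (spectralPower lam w) (Ioi 0) := by
  intro δ₁ (h₁ : 0 < δ₁) δ₂ (h₂ : 0 < δ₂) h
  obtain ⟨j, hlj, hwj⟩ := hpos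
  refine Finset.sum_lt_sum (fun i _ => ?_) ⟨j, Finset.mem_univ j, ?_⟩
  · have := hlam i
    have := hw i
    gcongr
  · gcongr

theorem tendsto_atTop : Tendsto (spectralPower lam w) atTop (𝓝 0) := by
  have hterm (i : ι) : Tendsto (fun δ => lam i / (lam i + δ)) atTop (𝓝 0) :=
    tendsto_const_nhds.div_atTop (tendsto_atTop_add_const_left _ _ tendsto_id)
  rw [show (0 : ℝ) = ∑ i, (0 : ℝ) ^ 2 * w i by simp]
  exact tendsto_finsetSum _ fun i _ => ((hterm i).pow 2).mul_const (w i)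

end spectralPower

namespace Matrix

variable {n : Type*} [Fintype n] [DecidableEq n]

theorem conjStarAlgAut_diagonal_inv {α : Type*} [Field α] [StarRing α]
    (U : unitary (Matrix n n α)) {d : n → α} (hd : ∀ i, d i ≠ 0) :
    (conjStarAlgAut α _ U (diagonal d))⁻¹ = conjStarAlgAut α _ U (diagonal d⁻¹) := by
  refine inv_eq_left_inv ?_
  rw [← map_mul, diagonal_mul_diagonal]
  simp [inv_mul_cancel₀ (hd _)]

theorem inv_add_smul_one_mul_of_eq_conjStarAlgAut {A : Matrix n n ℂ}
    {U : unitary (Matrix n n ℂ)} {lam : n → ℝ}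
    (hA : A = conjStarAlgAut ℂ _ U (diagonal fun i => (lam i : ℂ)))
    {δ : ℝ} (hδ : ∀ i, lam i + δ ≠ 0) :
    (A + (δ : ℂ) • 1)⁻¹ * A =
      conjStarAlgAut ℂ _ U (diagonal fun i => ((lam i / (lam i + δ) : ℝ) : ℂ)) := by
  have hshift : A + (δ : ℂ) • 1 =
      conjStarAlgAut ℂ _ U (diagonal fun i => ((lam i + δ : ℝ) : ℂ)) := by
    rw [hA, ← map_one (conjStarAlgAut ℂ _ U), ← map_smul, ← map_add, smul_one_eq_diagonal,
      diagonal_add]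
    simp
  rw [hshift, conjStarAlgAut_diagonal_inv _ (by exact_mod_cast hδ), hA, ← map_mul,
    diagonal_mul_diagonal]
  simp [div_eq_inv_mul]

theorem star_mulVec_mulVec_of_eq_conjStarAlgAut {A : Matrix n n ℂ}
    {U : unitary (Matrix n n ℂ)} {d : n → ℂ} (hA : A = conjStarAlgAut ℂ _ U (diagonal d))
    (y : n → ℂ) :
    star (U : Matrix n n ℂ) *ᵥ (A *ᵥ y) = diagonal d *ᵥ (star (U : Matrix n n ℂ) *ᵥ y) := by
  rw [hA, conjStarAlgAut_apply, mulVec_mulVec, mulVec_mulVec, ← Matrix.mul_assoc,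
    ← Matrix.mul_assoc, coe_star_mul_self, Matrix.one_mul]

end Matrix

section SqNorm

variable {m : ℕ}

theorem sqNorm_eq_star_dotProduct (v : Fin m → ℂ) : (sqNorm v : ℂ) = star v ⬝ᵥ v := by
  simp only [sqNorm, dotProduct, Pi.star_apply, Complex.ofReal_sum]
  refine Finset.sum_congr rfl fun i _ => ?_
  rw [Complex.star_def, mul_comm, Complex.mul_conj, Complex.normSq_eq_norm_sq]

theorem sqNorm_unitary_mulVec (U : unitary (Matrix (Fin m) (Fin m) ℂ)) (v : Fin m → ℂ) :
    sqNorm ((U : Matrix (Fin m) (Fin m) ℂ) *ᵥ v) = sqNorm v := by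
  have : (sqNorm ((U : Matrix (Fin m) (Fin m) ℂ) *ᵥ v) : ℂ) = sqNorm v := by
    rw [sqNorm_eq_star_dotProduct, sqNorm_eq_star_dotProduct, star_mulVec, dotProduct_mulVec,
      vecMul_vecMul, ← star_eq_conjTranspose, coe_star_mul_self, vecMul_one]
  exact_mod_cast this

theorem sqNorm_conjStarAlgAut_diagonal_mulVec (U : unitary (Matrix (Fin m) (Fin m) ℂ))
    (d : Fin m → ℂ) (v : Fin m → ℂ) :
    sqNorm (conjStarAlgAut ℂ _ U (diagonal d) *ᵥ v)
      = ∑ i, ‖d i‖ ^ 2 * ‖(star (U : Matrix (Fin m) (Fin m) ℂ) *ᵥ v) i‖ ^ 2 := by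
  rw [conjStarAlgAut_apply, ← mulVec_mulVec, ← mulVec_mulVec, sqNorm_unitary_mulVec]
  simp [sqNorm, mulVec_diagonal, mul_pow]

end SqNorm

noncomputable def rzfPower {m : ℕ} (A : Matrix (Fin m) (Fin m) ℂ) (b : Fin m → ℂ) (δ : ℝ) : ℝ :=
  sqNorm (((A + (δ : ℂ) • 1)⁻¹ * A) *ᵥ b)

namespace Matrix.PosSemidef

variable {m : ℕ} {A : Matrix (Fin m) (Fin m) ℂ}

theorem rzfPower_eqOn_spectralPower (hA : A.PosSemidef) (b : Fin m → ℂ) :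
    EqOn (rzfPower A b) (spectralPower hA.isHermitian.eigenvalues
        fun i => ‖(star (hA.isHermitian.eigenvectorUnitary : Matrix _ _ ℂ) *ᵥ b) i‖ ^ 2)
      (Ioi 0) := fun δ (hδ : 0 < δ) => by
  have hspec : A = conjStarAlgAut ℂ _ hA.isHermitian.eigenvectorUnitary
      (diagonal fun i => (hA.isHermitian.eigenvalues i : ℂ)) := hA.isHermitian.spectral_theorem
  have hδ' (i : Fin m) : hA.isHermitian.eigenvalues i + δ ≠ 0 :=
    (add_pos_of_nonneg_of_pos (hA.eigenvalues_nonneg i) hδ).ne'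
  simp only [rzfPower, inv_add_smul_one_mul_of_eq_conjStarAlgAut hspec hδ',
    sqNorm_conjStarAlgAut_diagonal_mulVec, Complex.norm_real, Real.norm_eq_abs, sq_abs,
    spectralPower, div_pow]

theorem continuousOn_strictAntiOn_tendsto_rzfPower (hA : A.PosSemidef) {b : Fin m → ℂ}
    (hb : b ≠ 0) (hbA : ∃ y, A *ᵥ y = b) :
    ContinuousOn (rzfPower A b) (Ioi 0) ∧ StrictAntiOn (rzfPower A b) (Ioi 0) ∧
      Tendsto (rzfPower A b) (𝓝[>] 0) (𝓝 (sqNorm b)) ∧ Tendsto (rzfPower A b) atTop (𝓝 0) := by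
  obtain ⟨y, rfl⟩ := hbA
  set U := hA.isHermitian.eigenvectorUnitary
  set lam := hA.isHermitian.eigenvalues
  have hspec : A = conjStarAlgAut ℂ _ U (diagonal fun i => (lam i : ℂ)) :=
    hA.isHermitian.spectral_theorem
  have hlam : ∀ i, 0 ≤ lam i := hA.eigenvalues_nonneg
  set c := star (U : Matrix (Fin m) (Fin m) ℂ) *ᵥ (A *ᵥ y) with hc_def
  set w := fun i => ‖c i‖ ^ 2
  have hc (i : Fin m) : c i = lam i * (star (U : Matrix (Fin m) (Fin m) ℂ) *ᵥ y) i := by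
    rw [hc_def, star_mulVec_mulVec_of_eq_conjStarAlgAut hspec, mulVec_diagonal]
  have hw0 (i : Fin m) (hi : lam i = 0) : w i = 0 := by simp [w, hc, hi]
  have hsum : ∑ i, w i = sqNorm (A *ᵥ y) := sqNorm_unitary_mulVec (star U) (A *ᵥ y)
  have hpos : ∃ i, 0 < lam i ∧ 0 < w i := by
    have hc0 : c ≠ 0 := fun h => hb <| by
      rw [← one_mulVec (A *ᵥ y), ← mul_star_self_of_mem U.2, ← mulVec_mulVec, ← hc_def, h,
        mulVec_zero]
    obtain ⟨i, hi⟩ := Function.ne_iff.mp hc0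
    exact ⟨i, (hlam i).lt_of_ne' fun h => hi (by simp [hc, h]), pow_pos (norm_pos_iff.mpr hi) 2⟩
  have hf := hA.rzfPower_eqOn_spectralPower (A *ᵥ y)
  have hcont := spectralPower.continuousOn_Ici (w := w) hlam
  have hbot : Tendsto (spectralPower lam w) (𝓝[>] 0) (𝓝 (sqNorm (A *ᵥ y))) := by
    rw [← hsum, ← spectralPower.apply_zero hw0]
    exact (hcont 0 self_mem_Ici).mono_left (nhdsWithin_mono _ Ioi_subset_Ici_self)
  refine ⟨(hcont.mono Ioi_subset_Ici_self).congr hf,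
    (spectralPower.strictAntiOn hlam (fun _ => by positivity) hpos).congr hf.symm,
    hbot.congr' hf.eventuallyEq_nhdsWithin.symm, ?_⟩
  exact (spectralPower.tendsto_atTop (lam := lam) (w := w)).congr' <|
    (eventually_gt_atTop 0).mono fun δ hδ => (hf hδ).symm

end Matrix.PosSemidef

section ZeroForcing

variable {M K : ℕ} {H : Matrix (Fin M) (Fin K) ℂ}

theorem conjTranspose_mulVec_bVec (hH : IsUnit (Hᴴ * H)) (u : Fin K → ℂ) (γ : ℝ) :
    Hᴴ *ᵥ bVec H u γ = (Real.sqrt γ : ℂ) • u := by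
  rw [bVec, mulVec_smul, mulVec_mulVec, ← Matrix.mul_assoc,
    mul_nonsing_inv _ ((isUnit_iff_isUnit_det _).mp hH), one_mulVec]

theorem bVec_ne_zero (hH : IsUnit (Hᴴ * H)) {u : Fin K → ℂ} (hu : u ≠ 0) {γ : ℝ} (hγ : 0 < γ) :
    bVec H u γ ≠ 0 := by
  intro hb
  have := conjTranspose_mulVec_bVec hH u γ
  rw [hb, mulVec_zero, eq_comm, smul_eq_zero] at this
  exact this.elim (by exact_mod_cast (Real.sqrt_pos.mpr hγ).ne') hu

theorem bVec_eq_mul_conjTranspose_mulVec_bVec (hH : IsUnit (Hᴴ * H)) (u : Fin K → ℂ) (γ : ℝ) :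
    bVec H u γ = (H * Hᴴ) *ᵥ bVec H ((Hᴴ * H)⁻¹ *ᵥ u) γ := by
  rw [← mulVec_mulVec, conjTranspose_mulVec_bVec hH, bVec, mulVec_smul, mulVec_mulVec]

end ZeroForcing

theorem stmt1_general {M K : ℕ}
    (H : Matrix (Fin M) (Fin K) ℂ) (hH : IsUnit (Hᴴ * H))
    (u : Fin K → ℂ) (hu : u ≠ 0) (γ : ℝ) (hγ : 0 < γ) :
    ContinuousOn (fun δ : ℝ => sqNorm (xVec H u γ δ)) (Set.Ioi 0) ∧
    StrictAntiOn (fun δ : ℝ => sqNorm (xVec H u γ δ)) (Set.Ioi 0) ∧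
    Filter.Tendsto (fun δ : ℝ => sqNorm (xVec H u γ δ)) (nhdsWithin 0 (Set.Ioi 0))
      (nhds (sqNorm (bVec H u γ))) ∧
    Filter.Tendsto (fun δ : ℝ => sqNorm (xVec H u γ δ)) Filter.atTop (nhds 0) ∧
    ∀ Pa : ℝ, 0 < Pa → Pa < sqNorm (bVec H u γ) →
      ∃! δ : ℝ, 0 < δ ∧ sqNorm (xVec H u γ δ) = Pa := by
  obtain ⟨hcont, hanti, hbot, htop⟩ :=
    (posSemidef_self_mul_conjTranspose H).continuousOn_strictAntiOn_tendsto_rzfPower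
      (bVec_ne_zero hH hu hγ) ⟨_, (bVec_eq_mul_conjTranspose_mulVec_bVec hH u γ).symm⟩
  exact ⟨hcont, hanti, hbot, htop, fun Pa hPa₀ hPa =>
    existsUnique_eq_of_strictAntiOn_Ioi hcont hanti hbot htop ⟨hPa₀, hPa⟩⟩

/-- the power map `δ ↦ x_δᴴ x_δ` is continuous and strictly decreasing
on `(0, ∞)`, tends to `bᴴ b` as `δ → 0⁺` and to `0` as `δ → ∞`; consequently, for any
`0 < P_a < bᴴ b` there is a unique `δ* > 0` with `x_{δ*}ᴴ x_{δ*} = P_a`. -/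
theorem stmt1 {M K : ℕ} (hM : 0 < M) (hK : 0 < K)
    (H : Matrix (Fin M) (Fin K) ℂ) (hH : IsUnit (Hᴴ * H))
    (u : Fin K → ℂ) (hu : u ≠ 0) (γ : ℝ) (hγ : 0 < γ) :
    ContinuousOn (fun δ : ℝ => sqNorm (xVec H u γ δ)) (Set.Ioi 0) ∧
    StrictAntiOn (fun δ : ℝ => sqNorm (xVec H u γ δ)) (Set.Ioi 0) ∧
    Filter.Tendsto (fun δ : ℝ => sqNorm (xVec H u γ δ)) (nhdsWithin 0 (Set.Ioi 0))
      (nhds (sqNorm (bVec H u γ))) ∧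
    Filter.Tendsto (fun δ : ℝ => sqNorm (xVec H u γ δ)) Filter.atTop (nhds 0) ∧
    ∀ Pa : ℝ, 0 < Pa → Pa < sqNorm (bVec H u γ) →
      ∃! δ : ℝ, 0 < δ ∧ sqNorm (xVec H u γ δ) = Pa :=
  stmt1_general H hH u hu γ hγ
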